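/- Suppose n ≥ 1, λ(n) := (φ_max² · σ_max / μ_min) · γⁿ < 1, q* satisfies q* = H q*, and ω̃ⁿ ∈ ℝ^k satisfies q_{ω̃ⁿ} = Π(Hⁿ q_{ω̃ⁿ}). Then ‖q* − q_{ω̃ⁿ}‖_μ ≤ (1/(1 − λ(n))) · ‖q* − Π q*‖_μ. -/

import Mathlib

open Finset Matrix

variable {X A : Type*}

noncomputable def bellman [Fintype X] [Fintype A] [Nonempty A]
    (P : X → A → X → ℝ) (r : X × A → ℝ) (γ : ℝ) (q : X × A → ℝ) :
    X × A → ℝ :=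
  fun z => r z + γ * ∑ x' : X, P z.1 z.2 x' *
    Finset.univ.sup' Finset.univ_nonempty (fun a' : A => q (x', a'))

noncomputable def supNorm [Fintype X] [Fintype A] [Nonempty X] [Nonempty A]
    (q : X × A → ℝ) : ℝ :=
  Finset.univ.sup' Finset.univ_nonempty (fun z : X × A => |q z|)

noncomputable def munorm [Fintype X] [Fintype A] (μ q : X × A → ℝ) : ℝ :=
  Real.sqrt (∑ z : X × A, μ z * q z ^ 2)

def qlin {k : ℕ} (φ : X × A → Fin k → ℝ) (ω : Fin k → ℝ) : X × A → ℝ :=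
  fun z => φ z ⬝ᵥ ω

noncomputable def cov [Fintype X] [Fintype A] {k : ℕ}
    (μ : X × A → ℝ) (φ : X × A → Fin k → ℝ) : Matrix (Fin k) (Fin k) ℝ :=
  ∑ z : X × A, μ z • Matrix.vecMulVec (φ z) (φ z)

noncomputable def proj [Fintype X] [Fintype A] {k : ℕ}
    (μ : X × A → ℝ) (φ : X × A → Fin k → ℝ) (q : X × A → ℝ) : X × A → ℝ :=
  fun z => φ z ⬝ᵥ (cov μ φ)⁻¹.mulVec (∑ z' : X × A, (μ z' * q z') • φ z')

noncomputable def enorm2 {k : ℕ} (v : Fin k → ℝ) : ℝ :=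
  Real.sqrt (∑ i, v i ^ 2)

noncomputable def phiMax [Fintype X] [Fintype A] [Nonempty X] [Nonempty A]
    {k : ℕ} (φ : X × A → Fin k → ℝ) : ℝ :=
  Finset.univ.sup' Finset.univ_nonempty (fun z : X × A => enorm2 (φ z))

noncomputable def sigmaMax {k : ℕ} (M : Matrix (Fin k) (Fin k) ℝ) : ℝ :=
  ‖LinearMap.toContinuousLinearMap (Matrix.toEuclideanLin M)‖

noncomputable def gmap [Fintype X] [Fintype A] [Nonempty A] {k : ℕ}
    (P : X → A → X → ℝ) (r : X × A → ℝ) (γ : ℝ)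
    (μ : X × A → ℝ) (φ : X × A → Fin k → ℝ) (n : ℕ) (ω : Fin k → ℝ) :
    Fin k → ℝ :=
  ∑ z : X × A, (μ z * ((bellman P r γ)^[n] (qlin φ ω) z - qlin φ ω z)) • φ z

section AuxLemmas

variable [Fintype X] [Fintype A] [Nonempty X] [Nonempty A]

lemma abs_le_supNorm' (q : X × A → ℝ) (z : X × A) : |q z| ≤ supNorm q := by
  simp only [supNorm]
  exact Finset.le_sup' (fun z : X × A => |q z|) (Finset.mem_univ z)

lemma supNorm_nonneg' (q : X × A → ℝ) : 0 ≤ supNorm q := by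
  obtain ⟨z⟩ := (inferInstance : Nonempty (X × A))
  exact le_trans (abs_nonneg (q z)) (abs_le_supNorm' q z)

lemma supNorm_le' (q : X × A → ℝ) (c : ℝ) (h : ∀ z, |q z| ≤ c) : supNorm q ≤ c := by
  simp only [supNorm]
  exact Finset.sup'_le _ _ fun z _ => h z

lemma abs_sup'_sub_sup'_le' {ι : Type*} (s : Finset ι) (hs : s.Nonempty) (f g : ι → ℝ)
    (c : ℝ) (h : ∀ i ∈ s, |f i - g i| ≤ c) : |s.sup' hs f - s.sup' hs g| ≤ c := by
  rw [abs_sub_le_iff]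
  constructor
  · rw [sub_le_iff_le_add]
    refine Finset.sup'_le _ _ fun i hi => ?_
    have h1 := abs_le.mp (h i hi)
    have h2 : g i ≤ s.sup' hs g := Finset.le_sup' _ hi
    linarith [h1.2]
  · rw [sub_le_iff_le_add]
    refine Finset.sup'_le _ _ fun i hi => ?_
    have h1 := abs_le.mp (h i hi)
    have h2 : f i ≤ s.sup' hs f := Finset.le_sup' _ hi
    linarith [h1.1]

lemma supNorm_bellman_sub (P : X → A → X → ℝ) (r : X × A → ℝ) (γ : ℝ)
    (hγ0 : 0 ≤ γ) (hP0 : ∀ x a x', 0 ≤ P x a x') (hP1 : ∀ x a, ∑ x' : X, P x a x' = 1)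
    (q q' : X × A → ℝ) :
    supNorm (bellman P r γ q - bellman P r γ q') ≤ γ * supNorm (q - q') := by
  set C := supNorm (q - q') with hC
  have hC0 : 0 ≤ C := supNorm_nonneg' _
  apply supNorm_le'
  intro z
  have hM : ∀ x' : X,
      |Finset.univ.sup' Finset.univ_nonempty (fun a' : A => q (x', a')) -
        Finset.univ.sup' Finset.univ_nonempty (fun a' : A => q' (x', a'))| ≤ C := by
    intro x'
    apply abs_sup'_sub_sup'_le'
    intro a _
    exact abs_le_supNorm' (q - q') (x', a)
  simp only [Pi.sub_apply, bellman]
  have he : r z + γ * (∑ x' : X, P z.1 z.2 x' *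
        Finset.univ.sup' Finset.univ_nonempty (fun a' : A => q (x', a'))) -
      (r z + γ * (∑ x' : X, P z.1 z.2 x' *
        Finset.univ.sup' Finset.univ_nonempty (fun a' : A => q' (x', a')))) =
      γ * ∑ x' : X, (P z.1 z.2 x' *
        (Finset.univ.sup' Finset.univ_nonempty (fun a' : A => q (x', a')) -
         Finset.univ.sup' Finset.univ_nonempty (fun a' : A => q' (x', a')))) := by
    rw [Finset.sum_congr rfl (fun x' _ => mul_sub (P z.1 z.2 x') _ _),
      Finset.sum_sub_distrib]
    ring
  rw [he, abs_mul, abs_of_nonneg hγ0]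
  have hb : |∑ x' : X, (P z.1 z.2 x' *
      (Finset.univ.sup' Finset.univ_nonempty (fun a' : A => q (x', a')) -
       Finset.univ.sup' Finset.univ_nonempty (fun a' : A => q' (x', a'))))| ≤ C := by
    calc |∑ x' : X, _| ≤ ∑ x' : X, |P z.1 z.2 x' *
        (Finset.univ.sup' Finset.univ_nonempty (fun a' : A => q (x', a')) -
         Finset.univ.sup' Finset.univ_nonempty (fun a' : A => q' (x', a')))| :=
      Finset.abs_sum_le_sum_abs _ _
    _ ≤ ∑ x' : X, P z.1 z.2 x' * C := by
        refine Finset.sum_le_sum fun x' _ => ?_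
        rw [abs_mul, abs_of_nonneg (hP0 _ _ _)]
        exact mul_le_mul_of_nonneg_left (hM x') (hP0 _ _ _)
    _ = C := by rw [← Finset.sum_mul, hP1]; ring
  exact mul_le_mul_of_nonneg_left hb hγ0

lemma supNorm_bellman_iter_sub (P : X → A → X → ℝ) (r : X × A → ℝ) (γ : ℝ)
    (hγ0 : 0 ≤ γ) (hP0 : ∀ x a x', 0 ≤ P x a x') (hP1 : ∀ x a, ∑ x' : X, P x a x' = 1)
    (q q' : X × A → ℝ) (n : ℕ) :
    supNorm ((bellman P r γ)^[n] q - (bellman P r γ)^[n] q') ≤ γ ^ n * supNorm (q - q') := by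
  induction n with
  | zero => simp
  | succ n ih =>
    rw [Function.iterate_succ_apply', Function.iterate_succ_apply']
    calc supNorm (bellman P r γ ((bellman P r γ)^[n] q) -
          bellman P r γ ((bellman P r γ)^[n] q')) ≤
        γ * supNorm ((bellman P r γ)^[n] q - (bellman P r γ)^[n] q') :=
      supNorm_bellman_sub P r γ hγ0 hP0 hP1 _ _
    _ ≤ γ * (γ ^ n * supNorm (q - q')) := mul_le_mul_of_nonneg_left ih hγ0
    _ = γ ^ (n + 1) * supNorm (q - q') := by ring

lemma enorm2_nonneg' {k : ℕ} (v : Fin k → ℝ) : 0 ≤ enorm2 v := Real.sqrt_nonneg _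

lemma enorm2_eq_norm' {k : ℕ} (v : Fin k → ℝ) :
    enorm2 v = ‖(WithLp.equiv 2 (Fin k → ℝ)).symm v‖ := by
  rw [EuclideanSpace.norm_eq]
  simp [enorm2, Real.norm_eq_abs, sq_abs]

lemma abs_dotProduct_le' {k : ℕ} (a b : Fin k → ℝ) : |a ⬝ᵥ b| ≤ enorm2 a * enorm2 b := by
  have h1 : ∀ c : Fin k → ℝ, ∑ i, c i * b i ≤ enorm2 c * enorm2 b := fun c => by
    simpa [enorm2] using Real.sum_mul_le_sqrt_mul_sqrt Finset.univ c b
  rw [abs_le]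
  constructor
  · have h2 := h1 (fun i => -(a i))
    have he : enorm2 (fun i => -(a i)) = enorm2 a := by simp [enorm2]
    rw [he] at h2
    have h3 : ∑ i, -(a i) * b i = -(a ⬝ᵥ b) := by
      simp [dotProduct, ← Finset.sum_neg_distrib, neg_mul]
    linarith [h2, h3 ▸ h2]
  · simpa [dotProduct] using h1 a

lemma enorm2_sum_smul_le {ι : Type*} {k : ℕ} (s : Finset ι) (c : ι → ℝ) (w : ι → Fin k → ℝ) :
    enorm2 (∑ i ∈ s, c i • w i) ≤ ∑ i ∈ s, |c i| * enorm2 (w i) := by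
  rw [enorm2_eq_norm']
  have he : (WithLp.equiv 2 (Fin k → ℝ)).symm (∑ i ∈ s, c i • w i) =
      ∑ i ∈ s, c i • (WithLp.equiv 2 (Fin k → ℝ)).symm (w i) := by
    ext i; simp [Finset.sum_apply]
  rw [he]
  calc ‖∑ i ∈ s, c i • (WithLp.equiv 2 (Fin k → ℝ)).symm (w i)‖ ≤
      ∑ i ∈ s, ‖c i • (WithLp.equiv 2 (Fin k → ℝ)).symm (w i)‖ := norm_sum_le _ _
  _ = ∑ i ∈ s, |c i| * enorm2 (w i) := by
      refine Finset.sum_congr rfl fun i _ => ?_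
      rw [norm_smul, Real.norm_eq_abs, enorm2_eq_norm']

lemma enorm2_mulVec_le {k : ℕ} (M : Matrix (Fin k) (Fin k) ℝ) (v : Fin k → ℝ) :
    enorm2 (M.mulVec v) ≤ sigmaMax M * enorm2 v := by
  rw [enorm2_eq_norm', enorm2_eq_norm']
  have h := ContinuousLinearMap.le_opNorm
    (LinearMap.toContinuousLinearMap (Matrix.toEuclideanLin M))
    ((WithLp.equiv 2 (Fin k → ℝ)).symm v)
  have e : (LinearMap.toContinuousLinearMap (Matrix.toEuclideanLin M))
      ((WithLp.equiv 2 (Fin k → ℝ)).symm v) =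
      (WithLp.equiv 2 (Fin k → ℝ)).symm (M.mulVec v) := rfl
  rw [e] at h
  exact h

lemma sigmaMax_nonneg {k : ℕ} (M : Matrix (Fin k) (Fin k) ℝ) : 0 ≤ sigmaMax M :=
  norm_nonneg _

lemma enorm2_le_phiMax {k : ℕ} (φ : X × A → Fin k → ℝ) (z : X × A) :
    enorm2 (φ z) ≤ phiMax φ := by
  simp only [phiMax]
  exact Finset.le_sup' (fun z : X × A => enorm2 (φ z)) (Finset.mem_univ z)

lemma phiMax_nonneg {k : ℕ} (φ : X × A → Fin k → ℝ) : 0 ≤ phiMax φ := by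
  obtain ⟨z⟩ := (inferInstance : Nonempty (X × A))
  exact le_trans (enorm2_nonneg' (φ z)) (enorm2_le_phiMax φ z)

lemma proj_sub' {k : ℕ} (μ : X × A → ℝ) (φ : X × A → Fin k → ℝ) (f g : X × A → ℝ) :
    proj μ φ (f - g) = proj μ φ f - proj μ φ g := by
  funext z
  have hsum : (∑ z' : X × A, (μ z' * (f z' - g z')) • φ z') =
      (∑ z' : X × A, (μ z' * f z') • φ z') - (∑ z' : X × A, (μ z' * g z') • φ z') := by
    rw [← Finset.sum_sub_distrib]
    apply Finset.sum_congr rfl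
    intro z' _
    rw [mul_sub, sub_smul]
  simp only [proj, Pi.sub_apply]
  rw [hsum, Matrix.mulVec_sub, dotProduct_sub]

lemma supNorm_proj_le {k : ℕ} (μ : X × A → ℝ) (φ : X × A → Fin k → ℝ)
    (hμ0 : ∀ z, 0 ≤ μ z) (hμ1 : ∑ z : X × A, μ z = 1) (g : X × A → ℝ) :
    supNorm (proj μ φ g) ≤ phiMax φ ^ 2 * sigmaMax (cov μ φ)⁻¹ * supNorm g := by
  have hvb : enorm2 (∑ z' : X × A, (μ z' * g z') • φ z') ≤ phiMax φ * supNorm g := by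
    calc enorm2 (∑ z' : X × A, (μ z' * g z') • φ z')
        ≤ ∑ z' : X × A, |μ z' * g z'| * enorm2 (φ z') :=
          enorm2_sum_smul_le Finset.univ (fun z' : X × A => μ z' * g z') φ
    _ ≤ ∑ z' : X × A, μ z' * (phiMax φ * supNorm g) := by
        refine Finset.sum_le_sum fun z' _ => ?_
        rw [abs_mul, abs_of_nonneg (hμ0 z')]
        have h1 : |g z'| ≤ supNorm g := abs_le_supNorm' g z'
        have h2 : enorm2 (φ z') ≤ phiMax φ := enorm2_le_phiMax φ z'
        have h3 : (0:ℝ) ≤ enorm2 (φ z') := enorm2_nonneg' _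
        nlinarith [mul_le_mul (mul_le_mul_of_nonneg_left h1 (hμ0 z')) h2 h3
          (mul_nonneg (hμ0 z') (supNorm_nonneg' g))]
    _ = phiMax φ * supNorm g := by rw [← Finset.sum_mul, hμ1, one_mul]
  apply supNorm_le'
  intro z
  have hmv : enorm2 ((cov μ φ)⁻¹.mulVec (∑ z' : X × A, (μ z' * g z') • φ z')) ≤
      sigmaMax (cov μ φ)⁻¹ * (phiMax φ * supNorm g) :=
    le_trans (enorm2_mulVec_le _ _)
      (mul_le_mul_of_nonneg_left hvb (sigmaMax_nonneg _))
  have habs : |proj μ φ g z| ≤ enorm2 (φ z) *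
      enorm2 ((cov μ φ)⁻¹.mulVec (∑ z' : X × A, (μ z' * g z') • φ z')) := by
    simp only [proj]
    exact abs_dotProduct_le' _ _
  calc |proj μ φ g z| ≤ enorm2 (φ z) *
      enorm2 ((cov μ φ)⁻¹.mulVec (∑ z' : X × A, (μ z' * g z') • φ z')) := habs
  _ ≤ phiMax φ * (sigmaMax (cov μ φ)⁻¹ * (phiMax φ * supNorm g)) :=
      mul_le_mul (enorm2_le_phiMax φ z) hmv (enorm2_nonneg' _) (phiMax_nonneg φ)
  _ = phiMax φ ^ 2 * sigmaMax (cov μ φ)⁻¹ * supNorm g := by ring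

lemma munorm_nonneg' (μ q : X × A → ℝ) : 0 ≤ munorm μ q := Real.sqrt_nonneg _

lemma munorm_triangle (μ f g : X × A → ℝ) (hμ0 : ∀ z, 0 ≤ μ z) :
    munorm μ (f + g) ≤ munorm μ f + munorm μ g := by
  have hF : 0 ≤ munorm μ f := munorm_nonneg' μ f
  have hG : 0 ≤ munorm μ g := munorm_nonneg' μ g
  have hcs : ∑ z : X × A, (Real.sqrt (μ z) * f z) * (Real.sqrt (μ z) * g z) ≤
      munorm μ f * munorm μ g := by
    have h := Real.sum_mul_le_sqrt_mul_sqrt Finset.univ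
      (fun z : X × A => Real.sqrt (μ z) * f z) (fun z : X × A => Real.sqrt (μ z) * g z)
    have e1 : ∀ (q : X × A → ℝ), ∑ z : X × A, (Real.sqrt (μ z) * q z) ^ 2 =
        ∑ z : X × A, μ z * q z ^ 2 := by
      intro q
      refine Finset.sum_congr rfl fun z _ => ?_
      rw [mul_pow, Real.sq_sqrt (hμ0 z)]
    rwa [e1 f, e1 g] at h
  have hsq : ∑ z : X × A, μ z * (f + g) z ^ 2 ≤ (munorm μ f + munorm μ g) ^ 2 := by
    have hf2 : ∑ z : X × A, μ z * f z ^ 2 = munorm μ f ^ 2 := by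
      rw [munorm, Real.sq_sqrt]
      exact Finset.sum_nonneg fun z _ => mul_nonneg (hμ0 z) (sq_nonneg _)
    have hg2 : ∑ z : X × A, μ z * g z ^ 2 = munorm μ g ^ 2 := by
      rw [munorm, Real.sq_sqrt]
      exact Finset.sum_nonneg fun z _ => mul_nonneg (hμ0 z) (sq_nonneg _)
    have expand : ∑ z : X × A, μ z * (f + g) z ^ 2 =
        (∑ z : X × A, μ z * f z ^ 2) + 2 * (∑ z : X × A,
          (Real.sqrt (μ z) * f z) * (Real.sqrt (μ z) * g z)) +
        (∑ z : X × A, μ z * g z ^ 2) := by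
      rw [Finset.mul_sum, ← Finset.sum_add_distrib, ← Finset.sum_add_distrib]
      refine Finset.sum_congr rfl fun z _ => ?_
      have hz : 2 * (Real.sqrt (μ z) * f z * (Real.sqrt (μ z) * g z)) =
          (Real.sqrt (μ z) * Real.sqrt (μ z)) * (2 * (f z * g z)) := by ring
      rw [hz, Real.mul_self_sqrt (hμ0 z)]
      simp only [Pi.add_apply]
      ring
    rw [expand, hf2, hg2]
    nlinarith [hcs]
  calc munorm μ (f + g) = Real.sqrt (∑ z : X × A, μ z * (f + g) z ^ 2) := rfl
  _ ≤ Real.sqrt ((munorm μ f + munorm μ g) ^ 2) := Real.sqrt_le_sqrt hsq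
  _ = munorm μ f + munorm μ g := Real.sqrt_sq (by linarith)

lemma munorm_le_supNorm (μ q : X × A → ℝ) (hμ0 : ∀ z, 0 ≤ μ z)
    (hμ1 : ∑ z : X × A, μ z = 1) : munorm μ q ≤ supNorm q := by
  have h0 : ∀ z : X × A, μ z * q z ^ 2 ≤ μ z * supNorm q ^ 2 := by
    intro z
    apply mul_le_mul_of_nonneg_left _ (hμ0 z)
    rw [← sq_abs]
    exact pow_le_pow_left₀ (abs_nonneg _) (abs_le_supNorm' q z) 2
  have h1 : ∑ z : X × A, μ z * q z ^ 2 ≤ supNorm q ^ 2 := by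
    calc ∑ z : X × A, μ z * q z ^ 2 ≤ ∑ z : X × A, μ z * supNorm q ^ 2 :=
      Finset.sum_le_sum fun z _ => h0 z
    _ = supNorm q ^ 2 := by rw [← Finset.sum_mul, hμ1, one_mul]
  calc munorm μ q = Real.sqrt (∑ z : X × A, μ z * q z ^ 2) := rfl
  _ ≤ Real.sqrt (supNorm q ^ 2) := Real.sqrt_le_sqrt h1
  _ = supNorm q := Real.sqrt_sq (supNorm_nonneg' q)

lemma sqrt_mumin_supNorm_le (μ q : X × A → ℝ) (μmin : ℝ) (hμmin : 0 < μmin)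
    (hμ : ∀ z, μmin ≤ μ z) : Real.sqrt μmin * supNorm q ≤ munorm μ q := by
  obtain ⟨z₀, -, hz₀⟩ := Finset.exists_mem_eq_sup' (Finset.univ_nonempty)
    (fun z : X × A => |q z|)
  have h1 : μmin * q z₀ ^ 2 ≤ ∑ z : X × A, μ z * q z ^ 2 := by
    calc μmin * q z₀ ^ 2 ≤ μ z₀ * q z₀ ^ 2 :=
      mul_le_mul_of_nonneg_right (hμ z₀) (sq_nonneg _)
    _ ≤ ∑ z : X × A, μ z * q z ^ 2 :=
      Finset.single_le_sum (fun z _ => mul_nonneg (le_trans hμmin.le (hμ z)) (sq_nonneg _))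
        (Finset.mem_univ z₀)
  calc Real.sqrt μmin * supNorm q = Real.sqrt μmin * |q z₀| := by simp only [supNorm, hz₀]
  _ = Real.sqrt (μmin * q z₀ ^ 2) := by
      rw [Real.sqrt_mul hμmin.le, Real.sqrt_sq_eq_abs]
  _ ≤ Real.sqrt (∑ z : X × A, μ z * q z ^ 2) := Real.sqrt_le_sqrt h1
  _ = munorm μ q := rfl

end AuxLemmas

theorem fixed_point_quality
    [Fintype X] [Fintype A] [Nonempty X] [Nonempty A] {k : ℕ}
    (P : X → A → X → ℝ) (r : X × A → ℝ) (γ : ℝ)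
    (hγ0 : 0 ≤ γ) (hγ1 : γ < 1)
    (hP0 : ∀ x a x', 0 ≤ P x a x') (hP1 : ∀ x a, ∑ x' : X, P x a x' = 1)
    (φ : X × A → Fin k → ℝ) (μ : X × A → ℝ) (μmin : ℝ)
    (hμmin : 0 < μmin) (hμ : ∀ z, μmin ≤ μ z) (hμ1 : ∑ z : X × A, μ z = 1)
    (hSig : IsUnit (cov μ φ).det)
    (n : ℕ) (hn : 1 ≤ n)
    (hcontr : (phiMax φ ^ 2 * sigmaMax (cov μ φ)⁻¹ / μmin) * γ ^ n < 1)
    (qstar : X × A → ℝ) (hq : qstar = bellman P r γ qstar)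
    (ωt : Fin k → ℝ)
    (hωt : qlin φ ωt = proj μ φ ((bellman P r γ)^[n] (qlin φ ωt))) :
    munorm μ (qstar - qlin φ ωt) ≤
      (1 / (1 - (phiMax φ ^ 2 * sigmaMax (cov μ φ)⁻¹ / μmin) * γ ^ n)) *
        munorm μ (qstar - proj μ φ qstar) := by
  have hμ0 : ∀ z, 0 ≤ μ z := fun z => le_trans hμmin.le (hμ z)
  have hfix : (bellman P r γ)^[n] qstar = qstar := Function.iterate_fixed hq.symm n
  set B := phiMax φ ^ 2 * sigmaMax (cov μ φ)⁻¹ with hB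
  have hB0 : 0 ≤ B := mul_nonneg (pow_nonneg (phiMax_nonneg φ) 2) (sigmaMax_nonneg _)
  set c := B * γ ^ n with hc
  have hc0 : 0 ≤ c := mul_nonneg hB0 (pow_nonneg hγ0 n)
  set D := munorm μ (qstar - qlin φ ωt) with hD
  set E := munorm μ (qstar - proj μ φ qstar) with hE
  have hE0 : 0 ≤ E := munorm_nonneg' μ _
  have hD0 : 0 ≤ D := munorm_nonneg' μ _
  set s := Real.sqrt μmin with hs
  have hs0 : 0 < s := Real.sqrt_pos.mpr hμmin
  set N := supNorm (qstar - qlin φ ωt) with hN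
  have hN0 : 0 ≤ N := supNorm_nonneg' _
  -- μmin ≤ 1 and μmin ≤ s
  have hμmin1 : μmin ≤ 1 := by
    obtain ⟨z₀⟩ := (inferInstance : Nonempty (X × A))
    calc μmin ≤ μ z₀ := hμ z₀
    _ ≤ ∑ z : X × A, μ z := Finset.single_le_sum (fun z _ => hμ0 z) (Finset.mem_univ z₀)
    _ = 1 := hμ1
  have hμs : μmin ≤ s := by
    calc μmin = Real.sqrt (μmin ^ 2) := (Real.sqrt_sq hμmin.le).symm
    _ ≤ s := Real.sqrt_le_sqrt (by nlinarith)
  -- key estimates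
  have h2 : s * N ≤ D := sqrt_mumin_supNorm_le μ _ μmin hμmin hμ
  have key2 : munorm μ (proj μ φ qstar - qlin φ ωt) ≤ c * N := by
    have step : proj μ φ qstar - qlin φ ωt =
        proj μ φ (qstar - (bellman P r γ)^[n] (qlin φ ωt)) := by
      rw [proj_sub', ← hωt]
    calc munorm μ (proj μ φ qstar - qlin φ ωt)
        = munorm μ (proj μ φ (qstar - (bellman P r γ)^[n] (qlin φ ωt))) := by rw [step]
    _ ≤ supNorm (proj μ φ (qstar - (bellman P r γ)^[n] (qlin φ ωt))) :=
        munorm_le_supNorm μ _ hμ0 hμ1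
    _ ≤ B * supNorm (qstar - (bellman P r γ)^[n] (qlin φ ωt)) :=
        supNorm_proj_le μ φ hμ0 hμ1 _
    _ = B * supNorm ((bellman P r γ)^[n] qstar - (bellman P r γ)^[n] (qlin φ ωt)) := by
        rw [hfix]
    _ ≤ B * (γ ^ n * supNorm (qstar - qlin φ ωt)) :=
        mul_le_mul_of_nonneg_left
          (supNorm_bellman_iter_sub P r γ hγ0 hP0 hP1 _ _ n) hB0
    _ = c * N := by rw [hc, hN]; ring
  have tri : D ≤ E + munorm μ (proj μ φ qstar - qlin φ ωt) := by
    have hsplit : qstar - qlin φ ωt =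
        (qstar - proj μ φ qstar) + (proj μ φ qstar - qlin φ ωt) :=
      (sub_add_sub_cancel _ _ _).symm
    rw [hD, hsplit]
    exact munorm_triangle μ _ _ hμ0
  have h1 : D ≤ E + c * N := le_trans tri (by linarith [key2])
  -- arithmetic conclusion
  have hgoal_eq : B / μmin * γ ^ n = c / μmin := by rw [hc]; ring
  rw [hgoal_eq] at hcontr ⊢
  have h1ml : 0 < 1 - c / μmin := by linarith
  rw [one_div_mul_eq_div, le_div_iff₀ h1ml]
  have hμN : μmin * N ≤ D := by
    calc μmin * N ≤ s * N := mul_le_mul_of_nonneg_right hμs hN0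
    _ ≤ D := h2
  have h3 : c * N ≤ (c / μmin) * D := by
    calc c * N = (c / μmin) * (μmin * N) := by field_simp
    _ ≤ (c / μmin) * D := mul_le_mul_of_nonneg_left hμN (div_nonneg hc0 hμmin.le)
  have h4 : D - (c / μmin) * D ≤ E := by linarith
  have h5 : D * (1 - c / μmin) = D - (c / μmin) * D := by ring
  linarith [h4, h5.le, h5.ge]
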